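/- Let X be a finite preordered set, R a commutative ring, θ a commuting map on I(X,R), and write θ(e_{ij}) = Σ C^{ij}_{xy} e_{xy}. Then for all i < j < l one has C^{ij}_{ij} = C^{jl}_{jl}, and for all i < l one has C^{il}_{il} = C^{ii}_{ii} − C^{ii}_{ll}. -/

import Mathlib

/-!
Applying `[θ(f), f] = 0` to `f + g` gives the linearized identity
`θ(f) g + θ(g) f = f θ(g) + g θ(f)`. For `f = e_{ij}`, `g = e_{jl}` with `i ≤ j < l`, only
the following terms survive in the `(i, l)` entry:
`C^{ij}_{ij} = C^{jl}_{jl} + [i = j] C^{ii}_{ll}`. The case `i ≠ j` is the first relation,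
the case `i = j` the second.
-/

variable {X R : Type*} [Preorder X] [LocallyFiniteOrder X] [DecidableEq X] [CommRing R]

/-- Membership in the incidence algebra `I(X,R)`: supported on pairs `x ≤ y`. -/
def IsInc (f : X → X → R) : Prop := ∀ x y : X, ¬ x ≤ y → f x y = 0

/-- The convolution product of the incidence algebra. -/
def conv (f g : X → X → R) : X → X → R :=
  fun x y => ∑ z ∈ Finset.Icc x y, f x z * g z y

/-- The matrix unit `e_{ij}` of the incidence algebra. -/
def eunit (i j : X) : X → X → R := fun x y => if x = i ∧ y = j then 1 else 0

/-- A commuting map on the incidence algebra: an `R`-linear map `θ : I(X,R) → I(X,R)`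
with `[θ(f), f] = 0` for all `f`. -/
structure IsCommMap (θ : (X → X → R) → X → X → R) : Prop where
  map_inc : ∀ f, IsInc f → IsInc (θ f)
  map_add : ∀ f g, IsInc f → IsInc g → θ (f + g) = θ f + θ g
  map_smul : ∀ (r : R) (f), IsInc f → θ (r • f) = r • θ f
  comm : ∀ f, IsInc f → conv (θ f) f = conv f (θ f)

lemma isInc_eunit {X R : Type*} [Preorder X] [DecidableEq X] [CommRing R] {i j : X}
    (h : i ≤ j) : IsInc (eunit i j : X → X → R) := by
  intro x y hxy
  simp only [eunit, ite_eq_right_iff, and_imp]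
  rintro rfl rfl
  exact absurd h hxy

lemma IsInc.add {X R : Type*} [Preorder X] [CommRing R] {f g : X → X → R}
    (hf : IsInc f) (hg : IsInc g) : IsInc (f + g) := by
  intro x y h
  simp [hf x y h, hg x y h]

lemma conv_add_left {X R : Type*} [Preorder X] [LocallyFiniteOrder X] [CommRing R]
    (f g h : X → X → R) : conv (f + g) h = conv f h + conv g h := by
  ext x y
  simp [conv, add_mul, Finset.sum_add_distrib]

lemma conv_add_right {X R : Type*} [Preorder X] [LocallyFiniteOrder X] [CommRing R]
    (f g h : X → X → R) : conv f (g + h) = conv f g + conv f h := by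
  ext x y
  simp [conv, mul_add, Finset.sum_add_distrib]

lemma conv_eunit_right (f : X → X → R) (i j x y : X) :
    conv f (eunit i j) x y = if y = j ∧ i ∈ Finset.Icc x y then f x i else 0 := by
  unfold conv eunit
  by_cases hy : y = j
  · subst hy
    simp only [and_true, true_and, mul_ite, mul_one, mul_zero, Finset.sum_ite_eq']
  · simp [hy]

lemma conv_eunit_left (f : X → X → R) (i j x y : X) :
    conv (eunit i j) f x y = if x = i ∧ j ∈ Finset.Icc x y then f j y else 0 := by
  unfold conv eunit
  by_cases hx : x = i
  · subst hx
    simp only [true_and, ite_mul, one_mul, zero_mul, Finset.sum_ite_eq']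
  · simp [hx]

namespace IsCommMap

lemma conv_add_conv_comm {X R : Type*} [Preorder X] [LocallyFiniteOrder X] [CommRing R]
    {θ : (X → X → R) → X → X → R} (hθ : IsCommMap θ) {f g : X → X → R} (hf : IsInc f)
    (hg : IsInc g) :
    conv (θ f) g + conv (θ g) f = conv f (θ g) + conv g (θ f) := by
  have hsum := hθ.comm (f + g) (hf.add hg)
  simp only [hθ.map_add f g hf hg, conv_add_left, conv_add_right] at hsum
  linear_combination hsum - hθ.comm f hf - hθ.comm g hg

lemma apply_eunit_chain {θ : (X → X → R) → X → X → R} (hθ : IsCommMap θ) {i j l : X}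
    (hij : i ≤ j) (hjl : j ≤ l) (hjl' : j ≠ l) :
    θ (eunit i j) i j = θ (eunit j l) j l + if i = j then θ (eunit i j) l l else 0 := by
  have h := congrFun₂ (hθ.conv_add_conv_comm (isInc_eunit hij) (isInc_eunit hjl)) i l
  have hj : j ∈ Finset.Icc i l := Finset.mem_Icc.mpr ⟨hij, hjl⟩
  have hl : l ∈ Finset.Icc i l := Finset.mem_Icc.mpr ⟨hij.trans hjl, le_rfl⟩
  simpa [conv_eunit_right, conv_eunit_left, hj, hl, hjl'.symm, eq_comm (a := j)] using h

end IsCommMap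

theorem coeff_relations_general
    (θ : (X → X → R) → X → X → R) (hθ : IsCommMap θ)
    (C : X → X → X → X → R) (hC : ∀ i j x y, C i j x y = θ (eunit i j) x y) :
    (∀ i j l : X, i ≤ j → i ≠ j → j ≤ l → j ≠ l → C i j i j = C j l j l) ∧
      (∀ i l : X, i ≤ l → i ≠ l → C i l i l = C i i i i - C i i l l) := by
  refine ⟨fun i j l hij hij' hjl hjl' => ?_, fun i l hil hil' => ?_⟩
  · simpa [hC, hij'] using hθ.apply_eunit_chain hij hjl hjl'
  · have h := hθ.apply_eunit_chain le_rfl hil hil'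
    simp only [if_true] at h
    rw [hC, hC, hC, h]
    ring

/-- writing `C^{ij}_{xy} := θ(e_{ij})(x,y)`, one has `C^{ij}_{ij} = C^{jl}_{jl}`
for `i < j < l` (relation (R5)), and `C^{il}_{il} = C^{ii}_{ii} - C^{ii}_{ll}` for `i < l`
(relation (R1)). -/
theorem coeff_relations [Finite X]
    (θ : (X → X → R) → X → X → R) (hθ : IsCommMap θ)
    (C : X → X → X → X → R) (hC : ∀ i j x y, C i j x y = θ (eunit i j) x y) :
    (∀ i j l : X, i ≤ j → i ≠ j → j ≤ l → j ≠ l → C i j i j = C j l j l) ∧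
      (∀ i l : X, i ≤ l → i ≠ l → C i l i l = C i i i i - C i i l l) :=
  coeff_relations_general θ hθ C hC
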